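/- arXiv:1304.3570 — 2 statements merged into one kernel-verified Lean document; each statement's English description precedes it below -/
import Mathlib

section
/- Let m_Q > 0 be as in the context and let E₀ < m_Q. There exists κ > 0, depending only on E₀, m_Q and the constant of the Sobolev embedding H¹(ℝ³) ↪ L⁴(ℝ³), such that for all real Schwartz functions u, w, n on ℝ³ satisfying K₀(u) < 0 and J(u) + (1/2)‖w‖²_{L²} + (1/4)‖n − u²‖²_{L²} ≤ E₀, one has 2‖w‖²_{L²} − 2·K₀(u) + 2·∫_{ℝ³}(n − u²)·u² dx ≥ κ. -/
open MeasureTheory SchwartzMap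
open scoped FourierTransform RealInnerProductSpace ENNReal

noncomputable section

abbrev E3 : Type := EuclideanSpace ℝ (Fin 3)

/-- Static Klein-Gordon energy. -/
def Jfun (φ : E3 → ℝ) : ℝ :=
  ∫ x : E3, (((φ x) ^ 2 + ‖gradient φ x‖ ^ 2) / 2 - (φ x) ^ 4 / 4)

def K0fun (φ : E3 → ℝ) : ℝ :=
  ∫ x : E3, ((φ x) ^ 2 + ‖gradient φ x‖ ^ 2 - (φ x) ^ 4)

def K2fun (φ : E3 → ℝ) : ℝ :=
  ∫ x : E3, (‖gradient φ x‖ ^ 2 - (3 / 4) * (φ x) ^ 4)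

def G0fun (φ : E3 → ℝ) : ℝ := Jfun φ - K0fun φ / 4

def G2fun (φ : E3 → ℝ) : ℝ := Jfun φ - K2fun φ / 3

/-- Squared homogeneous `Ḣ⁻¹` norm. -/
def Hm1sq (v : E3 → ℝ) : ℝ :=
  ∫ ξ : E3, ‖ξ‖⁻¹ ^ 2 * ‖𝓕 (fun x : E3 => (v x : ℂ)) ξ‖ ^ 2

/-- Energy of the Klein-Gordon-Zakharov system. -/
def Efun (α : ℝ) (u w n v : E3 → ℝ) : ℝ :=
  (∫ x : E3, ((u x) ^ 2 + ‖gradient u x‖ ^ 2 + (w x) ^ 2) / 2)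
    + (1 / 4) * ((α ^ 2)⁻¹ * Hm1sq v + ∫ x : E3, (n x) ^ 2)
    - (1 / 2) * ∫ x : E3, n x * (u x) ^ 2

/-- Squared `L²` norm for ‖φ‖²_{L⁴}: `(∫ φ⁴)^{1/2}`. -/
def L4sq (φ : E3 → ℝ) : ℝ := (∫ x : E3, (φ x) ^ 4) ^ ((1 : ℝ) / 2)

/-- Laplacian. -/
def lap (f : E3 → ℝ) (x : E3) : ℝ :=
  ∑ i : Fin 3, fderiv ℝ (fun y => fderiv ℝ f y (EuclideanSpace.single i 1)) x
    (EuclideanSpace.single i 1)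

/-- Time derivative. -/
def dt (u : ℝ → E3 → ℝ) (t : ℝ) (x : E3) : ℝ := deriv (fun s => u s x) t

/-- Second time derivative. -/
def dtt (u : ℝ → E3 → ℝ) (t : ℝ) (x : E3) : ℝ := deriv (fun s => dt u s x) t

/-- A classical solution of the Klein-Gordon-Zakharov system on a time interval `I`:
smooth in `(t,x)`, Schwartz in `x` with Schwartz seminorms locally bounded in `t`, and
solving `∂ₜ²u - Δu + u = n u`, `α⁻² ∂ₜ²n - Δn = -Δ(u²)` pointwise. -/
structure IsKGZSol (α : ℝ) (I : Set ℝ) (u n : ℝ → E3 → ℝ) : Prop where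
  smooth_u : ContDiffOn ℝ (⊤ : ℕ∞) (fun p : ℝ × E3 => u p.1 p.2) (I ×ˢ Set.univ)
  smooth_n : ContDiffOn ℝ (⊤ : ℕ∞) (fun p : ℝ × E3 => n p.1 p.2) (I ×ˢ Set.univ)
  schwartz_bdd : ∀ K : Set ℝ, K ⊆ I → IsCompact K → ∀ k m : ℕ, ∃ C : ℝ,
    ∀ t ∈ K, ∀ x : E3,
      ‖x‖ ^ k * ‖iteratedFDeriv ℝ m (u t) x‖ ≤ C ∧
      ‖x‖ ^ k * ‖iteratedFDeriv ℝ m (dt u t) x‖ ≤ C ∧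
      ‖x‖ ^ k * ‖iteratedFDeriv ℝ m (n t) x‖ ≤ C ∧
      ‖x‖ ^ k * ‖iteratedFDeriv ℝ m (dt n t) x‖ ≤ C
  eq_u : ∀ t ∈ I, ∀ x : E3, dtt u t x - lap (u t) x + u t x = n t x * u t x
  eq_n : ∀ t ∈ I, ∀ x : E3,
    (α ^ 2)⁻¹ * dtt n t x - lap (n t) x = - lap (fun y => (u t y) ^ 2) x

/-! ### Auxiliary lemmas -/

/-- bounded continuous real-valued functions on `E3` -/
def VBdd (g : E3 → ℝ) : Prop := Continuous g ∧ ∃ M, ∀ x, |g x| ≤ M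

lemma vbdd_schwartz (f : 𝓢(E3, ℝ)) : VBdd ⇑f := by
  refine ⟨f.continuous, ?_⟩
  obtain ⟨C, -, hC⟩ := f.decay 0 0
  exact ⟨C, fun x => by simpa [Real.norm_eq_abs] using hC x⟩

lemma VBdd.mul {g h : E3 → ℝ} (hg : VBdd g) (hh : VBdd h) : VBdd (fun x => g x * h x) := by
  obtain ⟨hgc, M, hM⟩ := hg
  obtain ⟨hhc, N, hN⟩ := hh
  refine ⟨hgc.mul hhc, |M| * |N| + 1, fun x => ?_⟩
  have h1 := hM x; have h2 := hN x
  have := abs_nonneg (g x); have := abs_nonneg (h x)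
  rw [abs_mul]
  nlinarith [le_abs_self M, le_abs_self N, abs_nonneg M, abs_nonneg N]

lemma integrable_vbdd_mul {g : E3 → ℝ} (hg : VBdd g) (f : 𝓢(E3, ℝ)) :
    Integrable (fun x => g x * f x) := by
  obtain ⟨hgc, M, hM⟩ := hg
  refine Integrable.mono' (f.integrable.norm.const_mul M)
    ((hgc.mul f.continuous).aestronglyMeasurable) (ae_of_all _ fun x => ?_)
  rw [Real.norm_eq_abs, abs_mul, Real.norm_eq_abs]
  exact mul_le_mul_of_nonneg_right (hM x) (abs_nonneg _)

lemma integrable_sq (f : 𝓢(E3, ℝ)) : Integrable (fun x => (f x) ^ 2) := by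
  have : (fun x => (f x) ^ 2) = fun x => f x * f x := by funext x; ring
  rw [this]; exact integrable_vbdd_mul (vbdd_schwartz f) f

lemma integrable_pow4 (f : 𝓢(E3, ℝ)) : Integrable (fun x => (f x) ^ 4) := by
  have : (fun x => (f x) ^ 4) = fun x => ((f x * f x) * f x) * f x := by funext x; ring
  rw [this]
  exact integrable_vbdd_mul (((vbdd_schwartz f).mul (vbdd_schwartz f)).mul (vbdd_schwartz f)) f

lemma norm_gradient_eq (f : 𝓢(E3, ℝ)) (x : E3) : ‖gradient (⇑f) x‖ = ‖(fderivCLM ℝ E3 ℝ f) x‖ := by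
  rw [gradient, fderivCLM_apply]
  exact LinearIsometryEquiv.norm_map _ _

lemma integrable_gradsq (f : 𝓢(E3, ℝ)) : Integrable (fun x => ‖gradient (⇑f) x‖ ^ 2) := by
  set F := fderivCLM ℝ E3 ℝ f with hF
  obtain ⟨C, -, hC⟩ := F.decay 0 0
  have hCb : ∀ x, ‖F x‖ ≤ C := fun x => by simpa using hC x
  have heq : (fun x => ‖gradient (⇑f) x‖ ^ 2) = fun x => ‖F x‖ ^ 2 := by
    funext x; rw [norm_gradient_eq]
  rw [heq]
  refine Integrable.mono' (F.integrable.norm.const_mul C)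
    (Continuous.aestronglyMeasurable (by fun_prop)) (ae_of_all _ fun x => ?_)
  rw [Real.norm_eq_abs, abs_of_nonneg (by positivity), pow_two]
  exact mul_le_mul_of_nonneg_right (hCb x) (norm_nonneg _)

lemma grad_const_smul (f : 𝓢(E3, ℝ)) (c : ℝ) (x : E3) :
    gradient (fun y => c * f y) x = c • gradient (⇑f) x := by
  rw [gradient, gradient, fderiv_const_mul f.differentiableAt, LinearIsometryEquiv.map_smul]

lemma young_ineq (t q r : ℝ) (ht : 0 < t) : -(t * q ^ 2 + r ^ 2 / (4 * t)) ≤ q * r := by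
  have h : t * q ^ 2 + q * r + r ^ 2 / (4 * t) = (2 * t * q + r) ^ 2 / (4 * t) := by
    field_simp; ring
  nlinarith [div_nonneg (sq_nonneg (2 * t * q + r)) (by linarith : (0:ℝ) ≤ 4 * t), h]

set_option maxHeartbeats 1600000 in
lemma kgz_arith (m_Q E₀ P T a b c : ℝ) (hmQ_pos : 0 < m_Q) (hE₀ : E₀ < m_Q)
    (hPpos : 0 < P) (hTP : P < T)
    (hmT : 4 * m_Q * T ≤ P ^ 2) (ha0 : 0 ≤ a) (hb0 : 0 ≤ b)
    (hcon : P / 2 - T / 4 + (1 / 2) * a + (1 / 4) * b ≤ E₀)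
    (hcgen : ∀ t : ℝ, 0 < t → -(t * b + T / (4 * t)) ≤ c) :
    3 * min m_Q (m_Q - E₀) ≤ 2 * a + 2 * (T - P) + 2 * c := by
  obtain ⟨μ, hμdef⟩ : ∃ μ : ℝ, μ = min m_Q (m_Q - E₀) := ⟨_, rfl⟩
  rw [← hμdef]
  have hμ0 : 0 < μ := hμdef ▸ lt_min hmQ_pos (by linarith)
  have hμm : μ ≤ m_Q := hμdef ▸ min_le_left _ _
  have hμd : μ ≤ m_Q - E₀ := hμdef ▸ min_le_right _ _
  have hTpos : 0 < T := by linarith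
  have hP4 : 4 * m_Q ≤ P := by nlinarith
  obtain ⟨s, hsdef⟩ : ∃ s : ℝ, s = T - 2 * P + 4 * E₀ := ⟨_, rfl⟩
  have hsb : b + 2 * a ≤ s := by rw [hsdef]; linarith
  have hs0 : 0 ≤ s := by linarith
  have hsμpos : 0 < s + μ := by linarith
  obtain ⟨A, hA, hA0⟩ : ∃ A : ℝ, A * A = s + μ ∧ 0 < A :=
    ⟨Real.sqrt (s + μ), Real.mul_self_sqrt hsμpos.le, Real.sqrt_pos.2 hsμpos⟩
  obtain ⟨B, hB, hB0⟩ : ∃ B : ℝ, B * B = T ∧ 0 < B :=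
    ⟨Real.sqrt T, Real.mul_self_sqrt hTpos.le, Real.sqrt_pos.2 hTpos⟩
  obtain ⟨t, htdef⟩ : ∃ t : ℝ, t = B / (2 * A) := ⟨_, rfl⟩
  have ht0 : 0 < t := by rw [htdef]; positivity
  have key1 : t * (s + μ) = A * B / 2 := by
    rw [← hA, htdef]; field_simp
  have key2 : T / (4 * t) = A * B / 2 := by
    rw [← hB, htdef]; field_simp; ring
  have hcD : -(A * B) ≤ c := by
    have := hcgen t ht0
    have htb : t * b ≤ t * (s + μ) := mul_le_mul_of_nonneg_left (by linarith) ht0.le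
    linarith
  clear key1 key2 ht0 htdef hcgen hcon
  clear t
  have hD2 : (A * B) * (A * B) = (s + μ) * T := by
    rw [show (A * B) * (A * B) = (A * A) * (B * B) by ring, hA, hB]
  have hsμT : s + μ ≤ T := by rw [hsdef]; linarith
  have hAB0 : 0 < A * B := mul_pos hA0 hB0
  have hDT : A * B ≤ T := by
    by_contra h
    push_neg at h
    have h1 : T * T < (A * B) * (A * B) := mul_self_lt_mul_self hTpos.le h
    have h2 : (s + μ) * T ≤ T * T := mul_le_mul_of_nonneg_right hsμT hTpos.le
    linarith [hD2 ▸ h1]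
  have hkey : (A * B) * (A * B) + 3 * μ * T ≤ (T - P) ^ 2 := by
    rw [hD2, hsdef]
    nlinarith [hmT, mul_le_mul_of_nonneg_right hμd hTpos.le]
  have hTPpos : 0 < T - P := by linarith
  have hX : 0 < (T - P) - A * B := by
    by_contra h
    push_neg at h
    have h1 : (T - P) * (T - P) ≤ (A * B) * (A * B) :=
      mul_self_le_mul_self hTPpos.le (by linarith)
    have e : (T - P) ^ 2 = (T - P) * (T - P) := by ring
    rw [e] at hkey
    linarith [hkey, h1, mul_pos hμ0 hTpos]
  have hprod : 3 * μ * T ≤ ((T - P) - A * B) * ((T - P) + A * B) := by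
    have e : ((T - P) - A * B) * ((T - P) + A * B) = (T - P) ^ 2 - (A * B) * (A * B) := by ring
    rw [e]; linarith [hkey]
  have h6 : ((T - P) - A * B) * ((T - P) + A * B) ≤ ((T - P) - A * B) * (2 * T) :=
    mul_le_mul_of_nonneg_left (by linarith) hX.le
  have h7 : 3 * μ * T ≤ (2 * ((T - P) - A * B)) * T := by
    have e : (2 * ((T - P) - A * B)) * T = ((T - P) - A * B) * (2 * T) := by ring
    rw [e]; linarith [hprod, h6]
  have hfinal : 3 * μ ≤ 2 * ((T - P) - A * B) := le_of_mul_le_mul_right h7 hTpos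
  linarith [hcD, ha0, hfinal]

set_option maxHeartbeats 1600000 in
theorem virial_lower_bound_blowup    (m_Q : ℝ) (hmQ_pos : 0 < m_Q)
    (hmQ_K0 : ∀ ψ : 𝓢(E3, ℝ), ψ ≠ 0 → K0fun ⇑ψ = 0 → m_Q ≤ Jfun ⇑ψ)
    (hmQ_K2 : ∀ ψ : 𝓢(E3, ℝ), ψ ≠ 0 → K2fun ⇑ψ = 0 → m_Q ≤ Jfun ⇑ψ) (E₀ : ℝ) (hE₀ : E₀ < m_Q) :
    ∃ κ : ℝ, 0 < κ ∧ ∀ u w n : 𝓢(E3, ℝ),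
      K0fun ⇑u < 0 →
      Jfun ⇑u + (1 / 2) * (∫ x : E3, (w x) ^ 2)
          + (1 / 4) * (∫ x : E3, (n x - (u x) ^ 2) ^ 2) ≤ E₀ →
      κ ≤ 2 * (∫ x : E3, (w x) ^ 2) - 2 * K0fun ⇑u
          + 2 * ∫ x : E3, (n x - (u x) ^ 2) * (u x) ^ 2 := by
  have hκ0 : 0 < 3 * min m_Q (m_Q - E₀) := by
    have := lt_min hmQ_pos (by linarith : (0:ℝ) < m_Q - E₀)
    linarith
  refine ⟨3 * min m_Q (m_Q - E₀), hκ0, fun u w n hK0lt hEcon => ?_⟩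
  -- basic integrability
  have hsqint := integrable_sq u
  have hTint := integrable_pow4 u
  have hPint : Integrable (fun x => (u x) ^ 2 + ‖gradient (⇑u) x‖ ^ 2) :=
    hsqint.add (integrable_gradsq u)
  obtain ⟨P, hPdef⟩ : ∃ P : ℝ, P = ∫ x : E3, ((u x) ^ 2 + ‖gradient (⇑u) x‖ ^ 2) := ⟨_, rfl⟩
  obtain ⟨T, hTdef⟩ : ∃ T : ℝ, T = ∫ x : E3, (u x) ^ 4 := ⟨_, rfl⟩
  have hK0eq : K0fun ⇑u = P - T := by
    rw [K0fun, integral_sub hPint hTint, hPdef, hTdef]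
  have hJeq : Jfun ⇑u = P / 2 - T / 4 := by
    rw [Jfun, integral_sub (hPint.div_const 2) (hTint.div_const 4), integral_div, integral_div,
      hPdef, hTdef]
  have hTP : P < T := by rw [hK0eq] at hK0lt; linarith
  have hP0 : 0 ≤ P := hPdef ▸ integral_nonneg fun x => by positivity
  have hT0 : 0 ≤ T := hTdef ▸ integral_nonneg fun x => by positivity
  have hPpos : 0 < P := by
    rcases hP0.lt_or_eq with h | h
    · exact h
    · exfalso
      have hae : (fun x => (u x) ^ 2 + ‖gradient (⇑u) x‖ ^ 2) =ᵐ[volume] 0 :=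
        (integral_eq_zero_iff_of_nonneg (fun x => by positivity) hPint).1 (by rw [← hPdef, ← h])
      have hae4 : (fun x => (u x) ^ 4) =ᵐ[volume] 0 := by
        filter_upwards [hae] with x hx
        simp only [Pi.zero_apply] at hx ⊢
        nlinarith [sq_nonneg (u x), sq_nonneg ‖gradient (⇑u) x‖, sq_nonneg ((u x) ^ 2)]
      have hT00 : T = 0 := by rw [hTdef, integral_eq_zero_of_ae hae4]
      rw [hK0eq, ← h, hT00] at hK0lt; linarith
  have hTpos : 0 < T := lt_of_le_of_lt hP0 hTP
  -- the rescaled test function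
  obtain ⟨l, hldef⟩ : ∃ l : ℝ, l = Real.sqrt (P / T) := ⟨_, rfl⟩
  have hlpos : 0 < l := hldef ▸ Real.sqrt_pos.2 (div_pos hPpos hTpos)
  have hl2 : l ^ 2 = P / T := hldef ▸ Real.sq_sqrt (div_nonneg hP0 hT0)
  obtain ⟨ψ, hψdef⟩ : ∃ ψ : 𝓢(E3, ℝ), ψ = l • u := ⟨_, rfl⟩
  have hcoe : ⇑ψ = fun x => l * u x := by rw [hψdef]; ext x; simp
  have hgradψ : ∀ x, ‖gradient (⇑ψ) x‖ ^ 2 = l ^ 2 * ‖gradient (⇑u) x‖ ^ 2 := by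
    intro x
    rw [hcoe, grad_const_smul, norm_smul, Real.norm_eq_abs, mul_pow, sq_abs]
  have hintegrand : (fun x => (ψ x) ^ 2 + ‖gradient (⇑ψ) x‖ ^ 2 - (ψ x) ^ 4)
      = fun x => l ^ 2 * ((u x) ^ 2 + ‖gradient (⇑u) x‖ ^ 2) - (l ^ 2 * l ^ 2) * (u x) ^ 4 := by
    funext x
    rw [show ψ x = l * u x from congrFun hcoe x, hgradψ x]; ring
  have hK0ψ : K0fun ⇑ψ = 0 := by
    rw [K0fun, hintegrand,
      integral_sub (hPint.const_mul _) (hTint.const_mul _), integral_const_mul,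
      integral_const_mul, ← hPdef, ← hTdef, hl2]
    field_simp
    ring
  have hJintegrand : (fun x => ((ψ x) ^ 2 + ‖gradient (⇑ψ) x‖ ^ 2) / 2 - (ψ x) ^ 4 / 4)
      = fun x => (l ^ 2 / 2) * ((u x) ^ 2 + ‖gradient (⇑u) x‖ ^ 2)
          - (l ^ 2 * l ^ 2 / 4) * (u x) ^ 4 := by
    funext x
    rw [show ψ x = l * u x from congrFun hcoe x, hgradψ x]; ring
  have hJψ : Jfun ⇑ψ = P ^ 2 / (4 * T) := by
    rw [Jfun, hJintegrand,
      integral_sub (hPint.const_mul _) (hTint.const_mul _), integral_const_mul,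
      integral_const_mul, ← hPdef, ← hTdef, hl2]
    field_simp
    ring
  have hψne : ψ ≠ 0 := by
    intro h
    rcases smul_eq_zero.mp (hψdef ▸ h) with h' | h'
    · exact absurd h' (ne_of_gt hlpos)
    · have hu0 : ⇑u = fun _ : E3 => (0 : ℝ) := by rw [h']; ext x; simp
      have : P = 0 := by
        rw [hPdef, hu0]
        simp [gradient_const]
      linarith
  have hmT : 4 * m_Q * T ≤ P ^ 2 := by
    have := hmQ_K0 ψ hψne hK0ψ
    rw [hJψ, le_div_iff₀ (by linarith : (0:ℝ) < 4 * T)] at this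
    linarith
  -- the remaining integrals
  obtain ⟨a, hadef⟩ : ∃ a : ℝ, a = ∫ x : E3, (w x) ^ 2 := ⟨_, rfl⟩
  obtain ⟨b, hbdef⟩ : ∃ b : ℝ, b = ∫ x : E3, (n x - (u x) ^ 2) ^ 2 := ⟨_, rfl⟩
  obtain ⟨c, hcdef⟩ : ∃ c : ℝ, c = ∫ x : E3, (n x - (u x) ^ 2) * (u x) ^ 2 := ⟨_, rfl⟩
  have ha0 : 0 ≤ a := hadef ▸ integral_nonneg fun x => by positivity
  have hb0 : 0 ≤ b := hbdef ▸ integral_nonneg fun x => by positivity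
  have h2 := integrable_vbdd_mul ((vbdd_schwartz n).mul (vbdd_schwartz u)) u
  have hbint : Integrable (fun x => (n x - (u x) ^ 2) ^ 2) := by
    have h1 := integrable_vbdd_mul (vbdd_schwartz n) n
    have he : (fun x => (n x - (u x) ^ 2) ^ 2)
        = fun x => (n x * n x - 2 * (n x * u x * u x)) + (u x) ^ 4 := by funext x; ring
    rw [he]; exact (h1.sub (h2.const_mul 2)).add hTint
  have hcint : Integrable (fun x => (n x - (u x) ^ 2) * (u x) ^ 2) := by
    have he : (fun x => (n x - (u x) ^ 2) * (u x) ^ 2)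
        = fun x => n x * u x * u x - (u x) ^ 4 := by funext x; ring
    rw [he]; exact h2.sub hTint
  have hcgen : ∀ t : ℝ, 0 < t → -(t * b + T / (4 * t)) ≤ c := by
    intro t ht0
    have hpt : ∀ x : E3, -(t * (n x - (u x) ^ 2) ^ 2 + (u x) ^ 4 / (4 * t))
        ≤ (n x - (u x) ^ 2) * (u x) ^ 2 := by
      intro x
      have h := young_ineq t (n x - (u x) ^ 2) ((u x) ^ 2) ht0
      calc -(t * (n x - (u x) ^ 2) ^ 2 + (u x) ^ 4 / (4 * t))
          = -(t * (n x - (u x) ^ 2) ^ 2 + ((u x) ^ 2) ^ 2 / (4 * t)) := by ring_nf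
        _ ≤ (n x - (u x) ^ 2) * (u x) ^ 2 := h
    have hmono := integral_mono
      (((hbint.const_mul t).add (hTint.div_const (4 * t))).neg) hcint hpt
    simp only [Pi.add_apply, Pi.neg_apply] at hmono
    rw [integral_neg, integral_add (hbint.const_mul t) (hTint.div_const (4 * t)),
      integral_const_mul, integral_div, ← hbdef, ← hTdef, ← hcdef] at hmono
    exact hmono
  have hcon : P / 2 - T / 4 + (1 / 2) * a + (1 / 4) * b ≤ E₀ := by
    rw [hJeq, ← hadef, ← hbdef] at hEcon
    linarith
  have := kgz_arith m_Q E₀ P T a b c hmQ_pos hE₀ hPpos hTP hmT ha0 hb0 hcon hcgen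
  rw [hK0eq, ← hadef, ← hcdef]
  linarith

end
end

section
/- Let m_Q > 0 be as in the context. For all real Schwartz functions u, n on ℝ³ with K₂(u) ≥ 0 and J(u) + (1/4)‖n − u²‖²_{L²} ≤ m_Q, one has 2·K₂(u) + (1/2)‖n − u²‖²_{L²} − ∫_{ℝ³}(n − u²)·u² dx ≥ 2(1 − 2/√6)·K₂(u) + (1/2 − 1/√6)·‖n − u²‖²_{L²}. -/
open MeasureTheory SchwartzMap
open scoped FourierTransform RealInnerProductSpace ENNReal

noncomputable section

section VCAux

lemma vc_norm_grad (f : E3 → ℝ) (x : E3) : ‖gradient f x‖ = ‖fderiv ℝ f x‖ := by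
  rw [gradient]; exact LinearIsometryEquiv.norm_map _ _

lemma vc_schwartz_bdd (f : 𝓢(E3, ℝ)) : ∃ C, ∀ x, ‖f x‖ ≤ C :=
  ⟨SchwartzMap.seminorm ℝ 0 0 f, fun x => by simpa using f.norm_le_seminorm ℝ x⟩

lemma vc_int_sq (f : 𝓢(E3, ℝ)) : MeasureTheory.Integrable (fun x => (f x)^2) := by
  have h := (f.integrable (μ := volume)).bdd_mul f.continuous.aestronglyMeasurable
    (Filter.Eventually.of_forall (vc_schwartz_bdd f).choose_spec)
  simpa [pow_two] using h

lemma vc_int_p4 (f : 𝓢(E3, ℝ)) : MeasureTheory.Integrable (fun x => (f x)^4) := by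
  have h := (vc_int_sq f).bdd_mul (f := fun x => (f x)^2) (f.continuous.pow 2).aestronglyMeasurable
    (by have hC := (vc_schwartz_bdd f).choose_spec
        exact Filter.Eventually.of_forall (p := fun x => ‖(f x)^2‖ ≤ (vc_schwartz_bdd f).choose^2) (fun x => by
          have h0 : ‖(f x)^2‖ = ‖f x‖^2 := by simp [abs_pow]
          rw [h0]; exact pow_le_pow_left₀ (norm_nonneg _) (hC x) 2))
  have he : (fun x : E3 => (f x)^2 * (f x)^2) = fun x => (f x)^4 := by ext x; ring
  rwa [he] at h

lemma vc_int_gradsq (f : 𝓢(E3, ℝ)) :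
    MeasureTheory.Integrable (fun x => ‖gradient (⇑f) x‖^2) := by
  set g := SchwartzMap.fderivCLM ℝ (E := E3) (F := ℝ) f with hg
  have h1 : MeasureTheory.Integrable (fun x => ‖g x‖) := (g.integrable (μ := volume)).norm
  have h2 := h1.bdd_mul (g.continuous.norm).aestronglyMeasurable
    (Filter.Eventually.of_forall (p := fun x => ‖‖g x‖‖ ≤ SchwartzMap.seminorm ℝ 0 0 g) fun x => by simpa using g.norm_le_seminorm ℝ x)
  have h3 : (fun x : E3 => ‖g x‖ * ‖g x‖) = fun x => ‖gradient (⇑f) x‖^2 := by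
    ext x
    rw [vc_norm_grad, ← SchwartzMap.fderivCLM_apply (𝕜 := ℝ) f x, pow_two, ← hg]
  rwa [h3] at h2

lemma vc_K0_split (f : 𝓢(E3, ℝ)) :
    K0fun ⇑f = (∫ x, (f x)^2) + (∫ x, ‖gradient (⇑f) x‖^2) - (∫ x, (f x)^4) := by
  have h1 : MeasureTheory.Integrable (fun x : E3 => (f x)^2 + ‖gradient (⇑f) x‖^2) := by
    exact (vc_int_sq f).add (vc_int_gradsq f)
  rw [K0fun, MeasureTheory.integral_sub h1 (vc_int_p4 f),
    MeasureTheory.integral_add (vc_int_sq f) (vc_int_gradsq f)]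

lemma vc_K2_split (f : 𝓢(E3, ℝ)) :
    K2fun ⇑f = (∫ x, ‖gradient (⇑f) x‖^2) - (3/4) * (∫ x, (f x)^4) := by
  have h1 : MeasureTheory.Integrable (fun x : E3 => (3:ℝ)/4 * (f x)^4) := by
    exact (vc_int_p4 f).const_mul _
  rw [K2fun, MeasureTheory.integral_sub (vc_int_gradsq f) h1,
    MeasureTheory.integral_const_mul]

lemma vc_J_split (f : 𝓢(E3, ℝ)) :
    Jfun ⇑f = ((∫ x, (f x)^2) + (∫ x, ‖gradient (⇑f) x‖^2))/2 - (∫ x, (f x)^4)/4 := by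
  have h1 : MeasureTheory.Integrable
      (fun x : E3 => ((f x)^2 + ‖gradient (⇑f) x‖^2)/2) := by
    exact ((vc_int_sq f).add (vc_int_gradsq f)).div_const 2
  have h2 : MeasureTheory.Integrable (fun x : E3 => (f x)^4/4) := by
    exact (vc_int_p4 f).div_const 4
  rw [Jfun, MeasureTheory.integral_sub h1 h2]
  have h3 : (∫ x : E3, ((f x)^2 + ‖gradient (⇑f) x‖^2)/2)
      = (∫ x : E3, ((f x)^2 + ‖gradient (⇑f) x‖^2))/2 := MeasureTheory.integral_div _ _
  have h4 : (∫ x : E3, (f x)^4/4) = (∫ x : E3, (f x)^4)/4 := MeasureTheory.integral_div _ _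
  rw [h3, h4, MeasureTheory.integral_add (vc_int_sq f) (vc_int_gradsq f)]

/-- Elementary Cauchy-Schwarz for integrals. -/
lemma vc_cs (a b : E3 → ℝ) (haa : MeasureTheory.Integrable (fun x => a x * a x))
    (hbb : MeasureTheory.Integrable (fun x => b x * b x))
    (hab : MeasureTheory.Integrable (fun x => a x * b x)) :
    (∫ x, a x * b x)^2 ≤ (∫ x, a x * a x) * (∫ x, b x * b x) := by
  set A := ∫ x, a x * a x with hA
  set B := ∫ x, b x * b x with hB
  set C := ∫ x, a x * b x with hC
  have key : ∀ t : ℝ, 0 ≤ A * (t * t) + (2*C) * t + B := by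
    intro t
    have h1 : MeasureTheory.Integrable (fun x : E3 => (t*t) * (a x * a x)) := by
      exact haa.const_mul _
    have h2 : MeasureTheory.Integrable (fun x : E3 => (2*t) * (a x * b x)) := by
      exact hab.const_mul _
    have h3 : (fun x : E3 => (t * a x + b x)^2)
        = fun x => (t*t) * (a x * a x) + ((2*t) * (a x * b x) + b x * b x) := by
      ext x; ring
    have h4 : 0 ≤ ∫ x : E3, (t * a x + b x)^2 :=
      MeasureTheory.integral_nonneg fun x => sq_nonneg _
    have h23 : MeasureTheory.Integrable
        (fun x : E3 => (2*t) * (a x * b x) + b x * b x) := by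
      exact h2.add hbb
    rw [h3, MeasureTheory.integral_add h1 h23,
      MeasureTheory.integral_add h2 hbb, MeasureTheory.integral_const_mul,
      MeasureTheory.integral_const_mul] at h4
    rw [← hA, ← hB, ← hC] at h4
    nlinarith [h4]
  have hd := discrim_le_zero key
  rw [discrim] at hd
  nlinarith [hd]

def vc_dilE (c : ℝ) (hc : c ≠ 0) : E3 ≃L[ℝ] E3 :=
  (LinearEquiv.smulOfNeZero ℝ E3 c hc).toContinuousLinearEquiv

def vc_dilS (c : ℝ) (hc : c ≠ 0) (ν : ℝ) (u : 𝓢(E3, ℝ)) : 𝓢(E3, ℝ) :=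
  ν • (SchwartzMap.compCLMOfContinuousLinearEquiv ℝ (vc_dilE c hc) u)

lemma vc_dilS_apply (c : ℝ) (hc : c ≠ 0) (ν : ℝ) (u : 𝓢(E3, ℝ)) (x : E3) :
    vc_dilS c hc ν u x = ν * u (c • x) := by
  have h : (vc_dilE c hc) x = c • x := rfl
  simp [vc_dilS, h]

lemma vc_fderiv_dil (c ν : ℝ) (u : 𝓢(E3, ℝ)) (x : E3) :
    fderiv ℝ (fun x : E3 => ν * u (c • x)) x = (ν * c) • (fderiv ℝ u (c • x)) := by
  have h1 : HasFDerivAt (fun x : E3 => c • x) (c • ContinuousLinearMap.id ℝ E3) x :=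
    (hasFDerivAt_id x).const_smul c
  have h2 : HasFDerivAt (⇑u) (fderiv ℝ u (c • x)) (c • x) :=
    (u.differentiable).differentiableAt.hasFDerivAt
  have h3 := (h2.comp x h1).const_smul ν
  have h4 : fderiv ℝ (fun x : E3 => ν * u (c • x)) x
      = ν • (fderiv ℝ (⇑u) (c • x)).comp (c • ContinuousLinearMap.id ℝ E3) :=
    HasFDerivAt.fderiv h3
  rw [h4]; ext y
  simp [mul_comm, mul_assoc, mul_left_comm]

lemma vc_comp_smul_int (g : E3 → ℝ) (c : ℝ) (hc : 0 < c) :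
    ∫ x : E3, g (c • x) = (c ^ 3)⁻¹ * ∫ x : E3, g x := by
  rw [MeasureTheory.Measure.integral_comp_smul_of_nonneg (volume : Measure E3) g (R := c)
    (hR := hc.le)]
  norm_num [smul_eq_mul]

lemma vc_dil_sq (c : ℝ) (hc : 0 < c) (ν : ℝ) (u : 𝓢(E3, ℝ)) :
    ∫ x, (vc_dilS c hc.ne' ν u x)^2 = ν^2 * ((c^3)⁻¹ * ∫ x, (u x)^2) := by
  have h1 : (fun x : E3 => (vc_dilS c hc.ne' ν u x)^2)
      = fun x => ν^2 * ((fun y => (u y)^2) (c • x)) := by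
    ext x; rw [vc_dilS_apply]; ring
  rw [h1, MeasureTheory.integral_const_mul]
  rw [vc_comp_smul_int (fun y : E3 => (u y)^2) c hc]

lemma vc_dil_p4 (c : ℝ) (hc : 0 < c) (ν : ℝ) (u : 𝓢(E3, ℝ)) :
    ∫ x, (vc_dilS c hc.ne' ν u x)^4 = ν^4 * ((c^3)⁻¹ * ∫ x, (u x)^4) := by
  have h1 : (fun x : E3 => (vc_dilS c hc.ne' ν u x)^4)
      = fun x => ν^4 * ((fun y => (u y)^4) (c • x)) := by
    ext x; rw [vc_dilS_apply]; ring
  rw [h1, MeasureTheory.integral_const_mul]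
  rw [vc_comp_smul_int (fun y : E3 => (u y)^4) c hc]

lemma vc_dil_gradsq (c : ℝ) (hc : 0 < c) (ν : ℝ) (u : 𝓢(E3, ℝ)) :
    ∫ x, ‖gradient (⇑(vc_dilS c hc.ne' ν u)) x‖^2
      = ν^2 * c^2 * ((c^3)⁻¹ * ∫ x, ‖gradient (⇑u) x‖^2) := by
  have hfun : ⇑(vc_dilS c hc.ne' ν u) = fun x : E3 => ν * u (c • x) :=
    funext (vc_dilS_apply c hc.ne' ν u)
  have h1 : (fun x : E3 => ‖gradient (⇑(vc_dilS c hc.ne' ν u)) x‖^2)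
      = fun x => ν^2 * c^2 * ((fun y => ‖gradient (⇑u) y‖^2) (c • x)) := by
    ext x
    rw [hfun, vc_norm_grad, vc_fderiv_dil, norm_smul]
    simp only [Real.norm_eq_abs]
    rw [vc_norm_grad]
    rw [mul_pow, sq_abs]
    ring
  rw [h1, MeasureTheory.integral_const_mul]
  rw [vc_comp_smul_int (fun y : E3 => ‖gradient (⇑u) y‖^2) c hc]

end VCAux


set_option maxHeartbeats 1000000 in
lemma vc_Mpos (u : 𝓢(E3, ℝ)) (hF : 0 < ∫ x : E3, (u x)^4) : 0 < ∫ x : E3, (u x)^2 := by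
  rcases (MeasureTheory.integral_nonneg (f := fun x : E3 => (u x)^2) (fun x : E3 => sq_nonneg (u x))).lt_or_eq with h | h
  · exact h
  · exfalso
    have hae : (fun x : E3 => (u x)^2) =ᵐ[volume] 0 :=
      (MeasureTheory.integral_eq_zero_iff_of_nonneg
        (fun x => sq_nonneg _) (vc_int_sq u)).mp h.symm
    have hae4 : (fun x : E3 => (u x)^4) =ᵐ[volume] 0 := by
      filter_upwards [hae] with x hx
      have hx0 : u x = 0 := sq_eq_zero_iff.mp hx
      simp [hx0]
    have h4 : (∫ x : E3, (u x)^4) = 0 := MeasureTheory.integral_eq_zero_of_ae hae4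
    linarith

set_option maxHeartbeats 1000000 in
/-- Gagliardo-Nirenberg-type bound obtained from the variational characterization
applied to the two-parameter rescaling `ν u(c x)`. -/
lemma vc_GN (m_Q : ℝ) (hmQ_pos : 0 < m_Q)
    (hmQ_K0 : ∀ ψ : 𝓢(E3, ℝ), ψ ≠ 0 → K0fun ⇑ψ = 0 → m_Q ≤ Jfun ⇑ψ)
    (u : 𝓢(E3, ℝ)) (hMpos : 0 < ∫ x : E3, (u x)^2)
    (hPpos : 0 < ∫ x : E3, ‖gradient (⇑u) x‖^2) (hFpos : 0 < ∫ x : E3, (u x)^4) :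
    27 * m_Q^2 * (∫ x : E3, (u x)^4)^2
      ≤ 16 * (∫ x : E3, (u x)^2) * (∫ x : E3, ‖gradient (⇑u) x‖^2)^3 := by
  set Mv : ℝ := ∫ x : E3, (u x)^2 with hMv
  set Pv : ℝ := ∫ x : E3, ‖gradient (⇑u) x‖^2 with hPv
  set Fv : ℝ := ∫ x : E3, (u x)^4 with hFv
  have hcarg : 0 < 3*Mv/Pv := div_pos (by linarith) hPpos
  have hc0 : 0 < Real.sqrt (3*Mv/Pv) := Real.sqrt_pos.mpr hcarg
  set c : ℝ := Real.sqrt (3*Mv/Pv) with hcdef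
  have hc2 : c^2 = 3*Mv/Pv := Real.sq_sqrt hcarg.le
  have hνarg : 0 < 4*Mv/Fv := div_pos (by linarith) hFpos
  have hν0 : 0 < Real.sqrt (4*Mv/Fv) := Real.sqrt_pos.mpr hνarg
  set ν : ℝ := Real.sqrt (4*Mv/Fv) with hνdef
  have hν2 : ν^2 = 4*Mv/Fv := Real.sq_sqrt hνarg.le
  have e1 : c^2 * Pv = 3*Mv := by rw [hc2, div_mul_cancel₀ _ hPpos.ne']
  have e2 : ν^2 * Fv = 4*Mv := by rw [hν2, div_mul_cancel₀ _ hFpos.ne']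
  have hc3pos : 0 < c^3 := pow_pos hc0 3
  set ψ : 𝓢(E3, ℝ) := vc_dilS c hc0.ne' ν u with hψ
  have hMψ : (∫ x, (ψ x)^2) = ν^2 * ((c^3)⁻¹ * Mv) := vc_dil_sq c hc0 ν u
  have hPψ : (∫ x, ‖gradient (⇑ψ) x‖^2) = ν^2 * c^2 * ((c^3)⁻¹ * Pv) :=
    vc_dil_gradsq c hc0 ν u
  have hFψ : (∫ x, (ψ x)^4) = ν^4 * ((c^3)⁻¹ * Fv) := vc_dil_p4 c hc0 ν u
  have hFψpos : 0 < ∫ x, (ψ x)^4 := by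
    rw [hFψ]
    exact mul_pos (pow_pos hν0 4) (mul_pos (inv_pos.mpr hc3pos) hFpos)
  have hψne : ψ ≠ 0 := by
    intro h
    rw [h] at hFψpos
    have h0 : (∫ x : E3, ((0 : 𝓢(E3,ℝ)) x)^4) = 0 := by simp
    rw [h0] at hFψpos
    exact lt_irrefl 0 hFψpos
  have hK0ψ : K0fun ⇑ψ = 0 := by
    rw [vc_K0_split ψ, hMψ, hPψ, hFψ]
    linear_combination ((c^3)⁻¹ * ν^2) * e1 - ((c^3)⁻¹ * ν^2) * e2
  have hJψ : Jfun ⇑ψ = (c^3)⁻¹ * ν^2 * Mv := by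
    rw [vc_J_split ψ, hMψ, hPψ, hFψ]
    linear_combination ((c^3)⁻¹ * ν^2 / 2) * e1 - ((c^3)⁻¹ * ν^2 / 4) * e2
  have hmle : m_Q ≤ (c^3)⁻¹ * ν^2 * Mv := hJψ ▸ hmQ_K0 ψ hψne hK0ψ
  have hinv : (c^3)⁻¹ * c^3 = 1 := inv_mul_cancel₀ hc3pos.ne'
  have h1 : m_Q * (c^3 * Fv) ≤ 4*Mv^2 := by
    have h := mul_le_mul_of_nonneg_right hmle (le_of_lt (mul_pos hc3pos hFpos))
    have hrhs : (c^3)⁻¹ * ν^2 * Mv * (c^3 * Fv) = 4*Mv^2 := by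
      linear_combination (ν^2*Mv*Fv) * hinv + Mv * e2
    linarith [h, hrhs.le, hrhs.ge]
  have h2 : 0 ≤ m_Q * (c^3 * Fv) := le_of_lt (mul_pos hmQ_pos (mul_pos hc3pos hFpos))
  have h3 : (m_Q * (c^3 * Fv))^2 ≤ (4*Mv^2)^2 := by nlinarith [h1, h2]
  have hc6 : (c^3)^2 * Pv^3 = 27 * Mv^3 := by
    have h62 : (c^3)^2 = (3*Mv)^3/Pv^3 := by
      rw [show (c^3)^2 = (c^2)^3 from by ring, hc2, div_pow]
    rw [h62, div_mul_cancel₀ _ (pow_pos hPpos 3).ne']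
    ring
  have h4 := mul_le_mul_of_nonneg_right h3 (le_of_lt (pow_pos hPpos 3))
  have h5 : (m_Q * (c^3 * Fv))^2 * Pv^3 = 27 * Mv^3 * (m_Q^2 * Fv^2) := by
    linear_combination (m_Q^2 * Fv^2) * hc6
  have hM3 : 0 < Mv^3 := pow_pos hMpos 3
  nlinarith [h4, h5, hM3]

lemma vc_sqle (a b : ℝ) (ha : 0 ≤ a) (hb : 0 ≤ b) (h : a^2 ≤ b^2) : a ≤ b := by
  nlinarith [h, ha, hb]

lemma vc_final (K D I s : ℝ) (hs0 : 0 < s) (hkey : I * s ≤ 4*K + D) :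
    2*(1 - 2/s)*K + (1/2 - 1/s)*D ≤ 2*K + (1/2)*D - I := by
  have hIle : I ≤ (4*K + D)/s := (le_div_iff₀ hs0).mpr hkey
  have heq : 2*(1 - 2/s)*K + (1/2 - 1/s)*D = 2*K + (1/2)*D - (4*K + D)/s := by
    field_simp
    ring
  linarith [hIle, heq.le, heq.ge]

set_option maxHeartbeats 1000000 in
/-- Purely algebraic endgame for the hard case. -/
lemma vc_endgame (Mv Pv Fv Dv q W : ℝ) (hq : 0 < q) (hD0 : 0 ≤ Dv) (hM0 : 0 ≤ Mv)
    (hP0 : 0 ≤ Pv) (hK : 0 ≤ Pv - 3/4 * Fv) (hFpos : 0 < Fv) (hcase : 8*Pv < 9*Fv)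
    (hJle : (Mv + Pv)/2 - Fv/4 + 1/4 * Dv ≤ q)
    (hGN : 27 * q^2 * Fv^2 ≤ 16 * Mv * Pv^3)
    (hW0 : 0 ≤ W) (hW2 : W^2 = 3*Fv*(9*Fv - 8*Pv)) :
    6 * (Dv * Fv) ≤ (Dv + 4*Pv - 3*Fv)^2 := by
  have hF0 : 0 ≤ Fv := hFpos.le
  have h9 : 0 ≤ 9*Fv - 8*Pv := by linarith
  have hX0 : 0 ≤ 54*Mv*Fv^2 + 32*Pv^3 := by
    nlinarith [mul_nonneg (mul_nonneg hM0 hF0) hF0, mul_nonneg (mul_nonneg hP0 hP0) hP0]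
  have hY0 : 0 ≤ 108*Fv^2*q := by nlinarith [mul_pos (mul_pos hFpos hFpos) hq]
  have hsqX : (108*Fv^2*q)^2 ≤ (54*Mv*Fv^2 + 32*Pv^3)^2 := by
    have e : (54*Mv*Fv^2 + 32*Pv^3)^2 - (108*Fv^2*q)^2
        = (54*Mv*Fv^2 - 32*Pv^3)^2 + 432*(Fv^2*(16*Mv*Pv^3 - 27*q^2*Fv^2)) := by ring
    have h2 := mul_nonneg (mul_nonneg hF0 hF0) (sub_nonneg.mpr hGN)
    have h3 := sq_nonneg (54*Mv*Fv^2 - 32*Pv^3)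
    nlinarith [e, h2, h3]
  have hCA' : 108*Fv^2*q ≤ 54*Mv*Fv^2 + 32*Pv^3 := vc_sqle _ _ hY0 hX0 hsqX
  have hCA : 135*Fv^3 - 54*Pv*Fv^2 - 32*Pv^3 ≤ 27*Fv^2 * (2*Mv - 2*Pv + 5*Fv - 4*q) := by
    nlinarith [hCA']
  have hC27nn : 0 ≤ 135*Fv^3 - 54*Pv*Fv^2 - 32*Pv^3 := by
    nlinarith [mul_nonneg h9 (mul_nonneg hF0 hF0), mul_nonneg h9 (mul_nonneg hF0 hP0),
      mul_nonneg h9 (mul_nonneg hP0 hP0), mul_pos (mul_pos hFpos hFpos) hFpos]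
  have hid : (135*Fv^3 - 54*Pv*Fv^2 - 32*Pv^3)^2 - 2187*Fv^5*(9*Fv - 8*Pv)
      = (4*Pv - 3*Fv)^3 * (16*Pv^3 + 36*Pv^2*Fv + 108*Pv*Fv^2 + 54*Fv^3) := by ring
  have hrhs_nn : 0 ≤ (4*Pv - 3*Fv)^3 * (16*Pv^3 + 36*Pv^2*Fv + 108*Pv*Fv^2 + 54*Fv^3) := by
    apply mul_nonneg (pow_nonneg (by linarith) 3)
    nlinarith [mul_nonneg (mul_nonneg hP0 hP0) hP0, mul_nonneg (mul_nonneg hP0 hP0) hF0,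
      mul_nonneg (mul_nonneg hP0 hF0) hF0, mul_nonneg (mul_nonneg hF0 hF0) hF0]
  have hexp : (27*Fv^2*W)^2 = 729*Fv^4*(3*Fv*(9*Fv - 8*Pv)) := by
    rw [mul_pow, hW2]; ring
  have hsq : (27*Fv^2*W)^2 ≤ (135*Fv^3 - 54*Pv*Fv^2 - 32*Pv^3)^2 := by
    nlinarith [hid, hrhs_nn, hexp]
  have h27W0 : 0 ≤ 27*Fv^2*W := by positivity
  have hWC : 27*Fv^2*W ≤ 135*Fv^3 - 54*Pv*Fv^2 - 32*Pv^3 :=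
    vc_sqle _ _ h27W0 hC27nn hsq
  have h27pos : 0 < 27*Fv^2 := by nlinarith [mul_pos hFpos hFpos]
  have hAW : W ≤ 2*Mv - 2*Pv + 5*Fv - 4*q := by
    have h := hWC.trans hCA
    exact le_of_mul_le_mul_left (by linarith [h]) h27pos
  have hfac1 : 0 ≤ 12*Fv - 8*Pv - 2*W - 2*Dv := by linarith
  have hfac2 : 0 ≤ 12*Fv - 8*Pv + 2*W - 2*Dv := by linarith
  nlinarith [mul_nonneg hfac1 hfac2, hW2]


theorem virial_coercivity    (m_Q : ℝ) (hmQ_pos : 0 < m_Q)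
    (hmQ_K0 : ∀ ψ : 𝓢(E3, ℝ), ψ ≠ 0 → K0fun ⇑ψ = 0 → m_Q ≤ Jfun ⇑ψ)
    (hmQ_K2 : ∀ ψ : 𝓢(E3, ℝ), ψ ≠ 0 → K2fun ⇑ψ = 0 → m_Q ≤ Jfun ⇑ψ) (u n : 𝓢(E3, ℝ))
    (hK2 : 0 ≤ K2fun ⇑u)
    (hJ : Jfun ⇑u + (1 / 4) * (∫ x : E3, (n x - (u x) ^ 2) ^ 2) ≤ m_Q) :
    2 * (1 - 2 / Real.sqrt 6) * K2fun ⇑u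
        + (1 / 2 - 1 / Real.sqrt 6) * (∫ x : E3, (n x - (u x) ^ 2) ^ 2)
      ≤ 2 * K2fun ⇑u + (1 / 2) * (∫ x : E3, (n x - (u x) ^ 2) ^ 2)
        - ∫ x : E3, (n x - (u x) ^ 2) * (u x) ^ 2 := by
  have hs0 : 0 < Real.sqrt 6 := Real.sqrt_pos.mpr (by norm_num)
  have hs2 : Real.sqrt 6 ^ 2 = 6 := Real.sq_sqrt (by norm_num)
  set s : ℝ := Real.sqrt 6 with hsdef
  set Mv : ℝ := ∫ x : E3, (u x)^2 with hMv
  set Pv : ℝ := ∫ x : E3, ‖gradient (⇑u) x‖^2 with hPv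
  set Fv : ℝ := ∫ x : E3, (u x)^4 with hFv
  set Dv : ℝ := ∫ x : E3, (n x - (u x) ^ 2) ^ 2 with hDv
  set Iv : ℝ := ∫ x : E3, (n x - (u x) ^ 2) * (u x) ^ 2 with hIv
  have hM0 : 0 ≤ Mv := MeasureTheory.integral_nonneg fun x => sq_nonneg _
  have hP0 : 0 ≤ Pv := MeasureTheory.integral_nonneg fun x => sq_nonneg _
  have hF0 : 0 ≤ Fv := MeasureTheory.integral_nonneg fun x => by positivity
  have hD0 : 0 ≤ Dv := MeasureTheory.integral_nonneg fun x => sq_nonneg _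
  have hK2' : K2fun ⇑u = Pv - (3/4) * Fv := vc_K2_split u
  have hJ' : Jfun ⇑u = (Mv + Pv)/2 - Fv/4 := vc_J_split u
  have hK : 0 ≤ Pv - (3/4) * Fv := hK2' ▸ hK2
  have hJle : (Mv + Pv)/2 - Fv/4 + (1/4) * Dv ≤ m_Q := by rw [← hJ']; exact hJ
  -- Cauchy-Schwarz
  have hCS : Iv^2 ≤ Dv * Fv := by
    have ha : MeasureTheory.Integrable (fun x : E3 => n x - (u x)^2) :=
      (n.integrable).sub (vc_int_sq u)
    obtain ⟨Cn, hCn⟩ := vc_schwartz_bdd n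
    obtain ⟨Cu, hCu⟩ := vc_schwartz_bdd u
    have hbdd_b : ∃ C, ∀ x : E3, ‖(u x)^2‖ ≤ C := by
      refine ⟨Cu^2, fun x => ?_⟩
      have h0 : ‖(u x)^2‖ = ‖u x‖^2 := by simp [abs_pow]
      rw [h0]; exact pow_le_pow_left₀ (norm_nonneg _) (hCu x) 2
    obtain ⟨Cb, hCb⟩ := hbdd_b
    have hbdd_a : ∃ C, ∀ x, ‖n x - (u x)^2‖ ≤ C :=
      ⟨Cn + Cb, fun x => (norm_sub_le _ _).trans (add_le_add (hCn x) (hCb x))⟩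
    have hma : MeasureTheory.AEStronglyMeasurable (fun x : E3 => n x - (u x)^2) volume :=
      (n.continuous.sub (u.continuous.pow 2)).aestronglyMeasurable
    have hmb : MeasureTheory.AEStronglyMeasurable (fun x : E3 => (u x)^2) volume :=
      (u.continuous.pow 2).aestronglyMeasurable
    have haa := ha.bdd_mul hma (Filter.Eventually.of_forall hbdd_a.choose_spec)
    have hbb := (vc_int_sq u).bdd_mul hmb (Filter.Eventually.of_forall hCb)
    have hab := (vc_int_sq u).bdd_mul hma (Filter.Eventually.of_forall hbdd_a.choose_spec)
    have h := vc_cs (fun x => n x - (u x)^2) (fun x => (u x)^2) haa hbb hab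
    have e1 : (∫ x : E3, (n x - (u x)^2) * (n x - (u x)^2)) = Dv := by
      rw [hDv]; congr 1; ext x; ring
    have e2 : (∫ x : E3, (u x)^2 * (u x)^2) = Fv := by
      rw [hFv]; congr 1; ext x; ring
    have e3 : (∫ x : E3, (n x - (u x)^2) * (u x)^2) = Iv := by rw [hIv]
    rw [e1, e2, e3] at h
    exact h
  -- main quadratic bound
  have hquad : 6 * (Dv * Fv) ≤ (Dv + 4*Pv - 3*Fv)^2 := by
    rcases le_or_gt (9*Fv) (8*Pv) with hcase | hcase
    · nlinarith [sq_nonneg (Dv - 4*Pv + 3*Fv),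
        mul_nonneg hD0 (by linarith : (0:ℝ) ≤ 16*Pv - 18*Fv)]
    · have hFpos : 0 < Fv := by linarith
      have hPpos : 0 < Pv := by linarith
      have hMpos : 0 < Mv := vc_Mpos u hFpos
      have hGN : 27 * m_Q^2 * Fv^2 ≤ 16 * Mv * Pv^3 :=
        vc_GN m_Q hmQ_pos hmQ_K0 u hMpos hPpos hFpos
      have hWarg : 0 ≤ 3*Fv*(9*Fv - 8*Pv) := by nlinarith
      exact vc_endgame Mv Pv Fv Dv m_Q (Real.sqrt (3*Fv*(9*Fv - 8*Pv))) hmQ_pos hD0 hM0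
        hP0 hK hFpos hcase hJle hGN (Real.sqrt_nonneg _) (Real.sq_sqrt hWarg)
  -- combine
  have key : Iv * s ≤ 4*Pv - 3*Fv + Dv := by
    rcases le_or_gt Iv 0 with hI | hI
    · have h1 : Iv * s ≤ 0 := mul_nonpos_of_nonpos_of_nonneg hI hs0.le
      linarith
    · have h1 : (Iv * s)^2 = 6 * Iv^2 := by rw [mul_pow, hs2]; ring
      have h2 : (Iv * s)^2 ≤ (Dv + 4*Pv - 3*Fv)^2 := by
        rw [h1]; nlinarith [hCS, hquad]
      have h3 : 0 ≤ Iv * s := le_of_lt (mul_pos hI hs0)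
      have h4 : 0 ≤ Dv + 4*Pv - 3*Fv := by linarith
      linarith [vc_sqle _ _ h3 h4 h2]
  have key2 : Iv * s ≤ 4*(K2fun ⇑u) + Dv := by rw [hK2']; linarith [key]
  exact vc_final (K2fun ⇑u) Dv Iv s hs0 key2


end
end
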